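/- The coefficient of the identity element 1 ∈ ℂˣ in the product ((1/676)Λ_{4435} − 1)((1/379)Λ_{4435} − 1)((1/266)Λ_{4435} − 1)((1/179)Λ_{4435} − 1) ∈ ℚ[ℂˣ] equals 6. -/

import Mathlib

/-!
Since multiplication by a root of unity permutes the roots of unity, `Λ_n * Λ_n = n • Λ_n`, so
`e = Λ_n / n` is an idempotent of `ℚ[ℂˣ]`. In the splitting by `e` and `1 - e`, each factor
`a • Λ_n - 1` acts as `n a - 1` and as `-1`, hence the coefficient of `1` in `∏ (a_i • Λ_n - 1)` is
`∏ (n a_i - 1) / n + (-1)^k (1 - 1/n)`. For the four weights of the theorem this is `6`.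
-/

/-- `Λ n` : the element of the group algebra `ℚ[ℂˣ]` given by the sum of the
basis elements corresponding to the `n`-th roots of unity (junk value `0` for `n = 0`). -/
noncomputable def Lambda (n : ℕ) : MonoidAlgebra ℚ ℂˣ :=
  if h : n = 0 then 0 else
    haveI : NeZero n := ⟨h⟩
    haveI : Fintype (rootsOfUnity n ℂ) := Fintype.ofFinite _
    ∑ ζ : rootsOfUnity n ℂ, MonoidAlgebra.single (ζ : ℂˣ) (1 : ℚ)

open Finset

theorem IsIdempotentElem.prod_smul_sub_one {R A ι : Type*} [CommRing R] [CommRing A] [Algebra R A]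
    {e : A} (he : IsIdempotentElem e) (s : Finset ι) (c : ι → R) :
    ∏ i ∈ s, (c i • e - 1) = (∏ i ∈ s, (c i - 1)) • e + ((-1) ^ #s : R) • (1 - e) := by
  classical
  induction s using Finset.induction_on with
  | empty => simp
  | insert j s hj ih =>
    rw [prod_insert hj, prod_insert hj, card_insert_of_notMem hj, ih]
    simp only [Algebra.smul_def, map_mul, map_sub, map_one, map_pow, map_neg]
    linear_combination (algebraMap R A (c j) * (algebraMap R A (∏ i ∈ s, (c i - 1)) - (-1) ^ #s))
      * he.eq

section Lambda

variable (n : ℕ) [NeZero n]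

theorem Lambda_mul_self : Lambda n * Lambda n = (n : ℚ) • Lambda n := by
  let : Fintype (rootsOfUnity n ℂ) := Fintype.ofFinite _
  have hn : n ≠ 0 := NeZero.ne n
  have single_mul_Lambda (ζ : rootsOfUnity n ℂ) :
      ∑ η : rootsOfUnity n ℂ, MonoidAlgebra.single (ζ : ℂˣ) (1 : ℚ) *
        MonoidAlgebra.single (η : ℂˣ) 1 = Lambda n := by
    rw [Lambda, dif_neg hn,
      ← Equiv.sum_comp (Equiv.mulLeft ζ) (fun η => MonoidAlgebra.single (η : ℂˣ) (1 : ℚ))]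
    simp [MonoidAlgebra.single_mul_single]
  conv_lhs => rw [Lambda, dif_neg hn, sum_mul_sum]
  rw [sum_congr rfl fun ζ _ => single_mul_Lambda ζ, sum_const, card_univ,
    Fintype.card_eq_nat_card, Complex.card_rootsOfUnity, Nat.cast_smul_eq_nsmul]

theorem coeff_one_Lambda : (Lambda n).coeff 1 = 1 := by
  let : Fintype (rootsOfUnity n ℂ) := Fintype.ofFinite _
  rw [Lambda, dif_neg (NeZero.ne n), MonoidAlgebra.coeff_sum, Finsupp.finsetSum_apply,
    sum_eq_single (1 : rootsOfUnity n ℂ)]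
  · simp [MonoidAlgebra.coeff_single]
  · intro ζ _ hζ
    have : (ζ : ℂˣ) ≠ 1 := by simpa using hζ
    simp [MonoidAlgebra.coeff_single, this]
  · simp

theorem isIdempotentElem_inv_smul_Lambda : IsIdempotentElem ((n : ℚ)⁻¹ • Lambda n) := by
  have hn : (n : ℚ) ≠ 0 := Nat.cast_ne_zero.mpr (NeZero.ne n)
  rw [IsIdempotentElem, smul_mul_smul_comm, Lambda_mul_self, smul_smul, mul_assoc,
    inv_mul_cancel₀ hn, mul_one]

theorem coeff_one_prod_smul_Lambda_sub_one {ι : Type*} (s : Finset ι) (a : ι → ℚ) :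
    (∏ i ∈ s, (a i • Lambda n - 1)).coeff 1 =
      (∏ i ∈ s, (n * a i - 1)) / n + (-1) ^ #s * (1 - 1 / n) := by
  have hn : (n : ℚ) ≠ 0 := Nat.cast_ne_zero.mpr (NeZero.ne n)
  have h : ∀ i, a i • Lambda n = (n * a i) • ((n : ℚ)⁻¹ • Lambda n) := fun i => by
    rw [smul_smul, mul_right_comm, mul_inv_cancel₀ hn, one_mul]
  simp only [h, (isIdempotentElem_inv_smul_Lambda n).prod_smul_sub_one]
  simp [MonoidAlgebra.coeff_smul, coeff_one_Lambda, div_eq_mul_inv]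

end Lambda

theorem betti_number_deg_4435 :
    ((((1 / 676 : ℚ) • Lambda 4435 - 1) * ((1 / 379 : ℚ) • Lambda 4435 - 1)
        * ((1 / 266 : ℚ) • Lambda 4435 - 1) * ((1 / 179 : ℚ) • Lambda 4435 - 1)
        : MonoidAlgebra ℚ ℂˣ)).coeff 1 = (6 : ℚ) := by
  have h := coeff_one_prod_smul_Lambda_sub_one 4435 univ ![1 / 676, 1 / 379, 1 / 266, 1 / 179]
  simp only [Fin.prod_univ_four, Matrix.cons_val] at h
  rw [h]
  norm_num
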